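/- arXiv:0706.1763 — 6 statements merged into one kernel-verified Lean document; each statement's English description precedes it below -/
import Mathlib

section
/- For every positive integer u, the sum over factorizations u = d·e of μ(d)(log d)(log e) equals (log u)Λ(u) − Λ₂(u). -/
open ArithmeticFunction

/-- The second generalized von Mangoldt function `Λ₂ = μ * log²`. -/
noncomputable def Lambda2 (n : ℕ) : ℝ :=
  ∑ d ∈ n.divisors, (moebius d : ℝ) * (Real.log ((n / d : ℕ) : ℝ)) ^ 2

/-! Writing `log d = log u - log e` for `u = d * e` splits the sum into `log u · (μ * log)(u)`
and `(μ * log²)(u)`. -/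

lemma Real.log_fst_eq_sub_of_mem_divisorsAntidiagonal {n : ℕ} {p : ℕ × ℕ}
    (hp : p ∈ n.divisorsAntidiagonal) : Real.log p.1 = Real.log n - Real.log p.2 := by
  rw [← (Nat.mem_divisorsAntidiagonal.mp hp).1, Nat.cast_mul,
    Real.log_mul (mod_cast Nat.left_ne_zero_of_mem_divisorsAntidiagonal hp)
      (mod_cast Nat.right_ne_zero_of_mem_divisorsAntidiagonal hp)]
  ring

lemma Nat.sum_divisorsAntidiagonal_mul_log_mul_log (f : ℕ → ℝ) (n : ℕ) :
    ∑ p ∈ n.divisorsAntidiagonal, f p.1 * Real.log p.1 * Real.log p.2 =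
      Real.log n * ∑ p ∈ n.divisorsAntidiagonal, f p.1 * Real.log p.2 -
        ∑ p ∈ n.divisorsAntidiagonal, f p.1 * Real.log p.2 ^ 2 := by
  rw [Finset.mul_sum, ← Finset.sum_sub_distrib]
  refine Finset.sum_congr rfl fun p hp => ?_
  rw [Real.log_fst_eq_sub_of_mem_divisorsAntidiagonal hp]
  ring

lemma vonMangoldt_eq_sum_divisorsAntidiagonal (n : ℕ) :
    (Λ n : ℝ) = ∑ p ∈ n.divisorsAntidiagonal, (moebius p.1 : ℝ) * Real.log p.2 := by
  rw [← moebius_mul_log_eq_vonMangoldt, mul_apply]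
  simp only [intCoe_apply, log_apply]

lemma Lambda2_eq_sum_divisorsAntidiagonal (n : ℕ) :
    Lambda2 n = ∑ p ∈ n.divisorsAntidiagonal, (moebius p.1 : ℝ) * Real.log p.2 ^ 2 :=
  (Nat.sum_divisorsAntidiagonal fun d e => (moebius d : ℝ) * Real.log e ^ 2).symm

theorem sum_moebius_log_mul_log_general (u : ℕ) :
    ∑ p ∈ u.divisorsAntidiagonal, (moebius p.1 : ℝ) * Real.log p.1 * Real.log p.2 =
      Real.log u * vonMangoldt u - Lambda2 u := by
  rw [Nat.sum_divisorsAntidiagonal_mul_log_mul_log (fun d => (moebius d : ℝ)),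
    vonMangoldt_eq_sum_divisorsAntidiagonal,
    Lambda2_eq_sum_divisorsAntidiagonal]

theorem sum_moebius_log_mul_log (u : ℕ) (hu : 0 < u) :
    ∑ p ∈ u.divisorsAntidiagonal, (moebius p.1 : ℝ) * Real.log p.1 * Real.log p.2 =
      Real.log u * vonMangoldt u - Lambda2 u :=
  sum_moebius_log_mul_log_general u
end

section
/- For every positive integer u, Λ₂(u) = Λ(u)·log(u) + (Λ * Λ)(u), where Λ * Λ denotes Dirichlet convolution. -/
/-!
Pointwise multiplication by `log` is a derivation of the ring of arithmetic functions under
Dirichlet convolution, since `log (d e) = log d + log e`. Applying it to `log = Λ * ζ` gives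
`log² = (Λ log) * ζ + Λ * log = (Λ log + Λ * Λ) * ζ`, and Möbius inversion yields
`μ * log² = Λ log + Λ * Λ`.
-/

open ArithmeticFunction
open scoped ArithmeticFunction.zeta ArithmeticFunction.Moebius

namespace ArithmeticFunction

theorem mul_pmul_log (f g : ArithmeticFunction ℝ) :
    pmul (f * g) log = pmul f log * g + f * pmul g log := by
  ext n
  simp only [pmul_apply, add_apply, mul_apply, log_apply, Finset.sum_mul,
    ← Finset.sum_add_distrib]
  refine Finset.sum_congr rfl fun x hx => ?_
  obtain ⟨rfl, hn⟩ := Nat.mem_divisorsAntidiagonal.mp hx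
  obtain ⟨ha, hb⟩ := mul_ne_zero_iff.mp hn
  rw [Nat.cast_mul, Real.log_mul (by exact_mod_cast ha) (by exact_mod_cast hb)]
  ring

theorem zeta_pmul_log : pmul (ζ : ArithmeticFunction ℝ) log = log := by
  rw [pmul_comm, pmul_zeta]

theorem log_pmul_log_eq_mul_zeta : pmul log log = (pmul Λ log + Λ * Λ) * ζ := by
  calc pmul log log = pmul (Λ * (ζ : ArithmeticFunction ℝ)) log := by rw [vonMangoldt_mul_zeta]
    _ = pmul Λ log * ζ + Λ * log := by rw [mul_pmul_log, zeta_pmul_log]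
    _ = (pmul Λ log + Λ * Λ) * ζ := by rw [← vonMangoldt_mul_zeta, add_mul, mul_assoc]

theorem moebius_mul_log_pmul_log :
    (μ : ArithmeticFunction ℝ) * pmul log log = pmul Λ log + Λ * Λ := by
  rw [log_pmul_log_eq_mul_zeta, mul_comm, mul_assoc, coe_zeta_mul_coe_moebius, mul_one]

end ArithmeticFunction

theorem Lambda2_eq_moebius_mul_log_pmul_log (n : ℕ) :
    Lambda2 n = ((μ : ArithmeticFunction ℝ) * pmul log log) n := by
  rw [Lambda2, mul_apply, ← Nat.sum_divisorsAntidiagonal (fun d e => (μ d : ℝ) * Real.log e ^ 2)]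
  simp [pmul_apply, log_apply, sq]

theorem Lambda2_eq_vonMangoldt_mul_log_add_conv_general (u : ℕ) :
    Lambda2 u = vonMangoldt u * Real.log u +
      ∑ p ∈ u.divisorsAntidiagonal, vonMangoldt p.1 * vonMangoldt p.2 := by
  rw [Lambda2_eq_moebius_mul_log_pmul_log, moebius_mul_log_pmul_log,
    ArithmeticFunction.add_apply, pmul_apply, log_apply, mul_apply]

theorem Lambda2_eq_vonMangoldt_mul_log_add_conv (u : ℕ) (hu : 0 < u) :
    Lambda2 u = vonMangoldt u * Real.log u +
      ∑ p ∈ u.divisorsAntidiagonal, vonMangoldt p.1 * vonMangoldt p.2 :=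
  Lambda2_eq_vonMangoldt_mul_log_add_conv_general u
end

section
/- The generalized von Mangoldt function Λ_k = μ * log^k vanishes on integers with more than k distinct prime factors. -/
/-! `Λ_k(n)` is an alternating sum, over the sets `S` of primes dividing `n`, of the degree `k`
polynomial `(log n - X)^k` evaluated at `∑_{p ∈ S} log p`. Such a sum is an iterated finite
difference, one difference per prime, with steps `log p`; each difference lowers the degree, so
more than `k` of them annihilate the polynomial. -/

open ArithmeticFunction

/-- The generalized von Mangoldt function `Λ_k = μ * log^k`. -/
noncomputable def LambdaK (k n : ℕ) : ℝ :=
  ∑ d ∈ n.divisors, (moebius d : ℝ) * (Real.log ((n / d : ℕ) : ℝ)) ^ k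

namespace Polynomial

theorem degree_sub_taylor_lt {R : Type*} [Ring R] {p : R[X]} (hp : p ≠ 0) (r : R) :
    (p - taylor r p).degree < p.degree :=
  degree_sub_lt_left (degree_taylor p r).symm hp (leadingCoeff_taylor r p).symm

theorem sum_powerset_neg_one_pow_mul_eval_sum_eq_zero {R ι : Type*} [CommRing R]
    [DecidableEq ι] (s : Finset ι) (x : ι → R) {p : R[X]}
    (hp : p.degree < (s.card : WithBot ℕ)) :
    ∑ t ∈ s.powerset, (-1) ^ t.card * p.eval (∑ i ∈ t, x i) = 0 := by
  induction s using Finset.induction_on generalizing p with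
  | empty =>
    obtain rfl : p = 0 := degree_eq_bot.mp (by simpa using hp)
    simp
  | @insert a s ha ih =>
    by_cases hp0 : p = 0
    · simp [hp0]
    have hdiff : (p - taylor (x a) p).degree < (s.card : WithBot ℕ) := by
      rw [Finset.card_insert_of_notMem ha, Nat.cast_succ] at hp
      exact (degree_sub_taylor_lt hp0 (x a)).trans_le (Order.le_of_lt_succ hp)
    rw [Finset.sum_powerset_insert ha, ← ih hdiff, ← Finset.sum_add_distrib]
    refine Finset.sum_congr rfl fun t ht => ?_
    have hat : a ∉ t := fun h => ha (Finset.mem_powerset.mp ht h)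
    rw [Finset.card_insert_of_notMem hat, Finset.sum_insert hat, eval_sub, taylor_eval,
      add_comm (x a), pow_succ]
    ring

end Polynomial

theorem sum_divisors_moebius_mul_eq_sum_powerset_primeFactors {R : Type*} [CommRing R]
    {n : ℕ} (hn : n ≠ 0) (f : ℕ → R) :
    ∑ d ∈ n.divisors, (moebius d : R) * f d =
      ∑ t ∈ n.primeFactors.powerset, (-1) ^ t.card * f (∏ p ∈ t, p) := by
  rw [← Finset.sum_filter_of_ne (p := Squarefree) fun d _ h => by
      contrapose! h; simp [moebius_eq_zero_of_not_squarefree h],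
    Nat.sum_divisors_filter_squarefree hn, Nat.factors_eq]
  refine Finset.sum_congr rfl fun t ht => ?_
  have hprime : ∀ p ∈ t, p.Prime := fun p hp =>
    Nat.prime_of_mem_primeFactors (Finset.mem_powerset.mp ht hp)
  have hμ : moebius (∏ p ∈ t, p) = (-1) ^ t.card := by
    rw [isMultiplicative_moebius.map_prod_of_subset_primeFactors n t (Finset.mem_powerset.mp ht),
      Finset.prod_congr rfl fun p hp => moebius_apply_prime (hprime p hp), Finset.prod_const]
  rw [t.prod_val, Function.id_def, hμ]
  push_cast
  rfl

theorem Real.log_natCast_div_prod_primes {n : ℕ} (hn : n ≠ 0) {t : Finset ℕ}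
    (ht : t ⊆ n.primeFactors) :
    Real.log ((n / ∏ p ∈ t, p : ℕ) : ℝ) = Real.log n - ∑ p ∈ t, Real.log p := by
  have hprod : (∏ p ∈ t, p) ≠ 0 :=
    Finset.prod_ne_zero_iff.mpr fun p hp => (Nat.prime_of_mem_primeFactors (ht hp)).ne_zero
  have hdvd : (∏ p ∈ t, p) ∣ n :=
    (Finset.prod_dvd_prod_of_subset _ _ _ ht).trans n.prod_primeFactors_dvd
  rw [Nat.cast_div hdvd (by exact_mod_cast hprod), Real.log_div (by exact_mod_cast hn)
    (by exact_mod_cast hprod), Nat.cast_prod, Real.log_prod fun p hp => by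
      exact_mod_cast (Nat.prime_of_mem_primeFactors (ht hp)).ne_zero]

open Polynomial in
theorem LambdaK_eq_zero_of_lt_card_primeFactors_general (k n : ℕ)
    (h : k < n.primeFactors.card) : LambdaK k n = 0 := by
  have hn : n ≠ 0 := by rintro rfl; simp at h
  have hdeg : ((C (Real.log n) - X) ^ k).degree < (n.primeFactors.card : WithBot ℕ) := by
    rw [degree_pow, ← neg_sub, degree_neg, degree_X_sub_C, nsmul_one]
    exact_mod_cast h
  rw [LambdaK, sum_divisors_moebius_mul_eq_sum_powerset_primeFactors hn,
    ← sum_powerset_neg_one_pow_mul_eval_sum_eq_zero _ (fun p : ℕ => Real.log p) hdeg]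
  refine Finset.sum_congr rfl fun t ht => ?_
  rw [Real.log_natCast_div_prod_primes hn (Finset.mem_powerset.mp ht)]
  simp

theorem LambdaK_eq_zero_of_lt_card_primeFactors (k n : ℕ) (hk : 1 ≤ k) (hn : 0 < n)
    (h : k < n.primeFactors.card) : LambdaK k n = 0 :=
  LambdaK_eq_zero_of_lt_card_primeFactors_general k n h
end

section
/- Let f₁, f₂ be arithmetic functions, k a positive integer, and D a positive integer. Then for any X ≥ 1, Σ_{m ≤ X, (m,k)=1} (f₁*f₂)(mD) = Σ_{d₁d₂=D} Σ_{m₁m₂ ≤ X, (m₁, k d₁)=1, (m₂,k)=1} f₁(m₁d₂) f₂(m₂d₁), where * denotes Dirichlet convolution. -/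
/-!
Writing `D = d₁ d₂` with `d₂ = gcd(a, D)`, the factorisations `a b = m D` correspond bijectively to
the data `d₁ d₂ = D`, `m₁ m₂ = m`, `gcd(m₁, d₁) = 1`, via `a = m₁ d₂`, `b = m₂ d₁`; the coprimality
is exactly what makes `gcd(m₁ d₂, D) = d₂` recover `d₂`. Summing over `m ≤ X` with `(m, k) = 1`
and regrouping by the pairs `(m₁, m₂)` gives the right-hand side, since `(m₁ m₂, k) = 1` and
`(m₁, d₁) = 1` together say `(m₁, k d₁) = 1` and `(m₂, k) = 1`.
-/

open Finset

namespace Nat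

theorem div_gcd_mul_div_eq_of_mul_eq_mul {a b m D : ℕ} (hD : D ≠ 0) (h : a * b = m * D) :
    D / a.gcd D ∣ b ∧ a / a.gcd D * (b / (D / a.gcd D)) = m := by
  set g := a.gcd D
  have hg : 0 < g := Nat.gcd_pos_of_pos_right a (Nat.pos_of_ne_zero hD)
  have hd₁ : 0 < D / g := Nat.div_pos (Nat.gcd_le_right a (Nat.pos_of_ne_zero hD)) hg
  have hreduced : a / g * b = m * (D / g) := by
    apply Nat.eq_of_mul_eq_mul_right hg
    rw [mul_right_comm, Nat.div_mul_cancel (Nat.gcd_dvd_left a D), h, mul_assoc,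
      Nat.div_mul_cancel (Nat.gcd_dvd_right a D)]
  have hdvd : D / g ∣ b :=
    (Nat.coprime_div_gcd_div_gcd hg).symm.dvd_of_dvd_mul_left (Dvd.intro_left _ hreduced.symm)
  refine ⟨hdvd, Nat.eq_of_mul_eq_mul_right hd₁ ?_⟩
  rw [mul_assoc, Nat.div_mul_cancel hdvd, hreduced]

theorem Coprime.gcd_mul_mul_right {m₁ d₁ : ℕ} (h : m₁.Coprime d₁) (d₂ : ℕ) :
    (m₁ * d₂).gcd (d₁ * d₂) = d₂ := by
  rw [Nat.gcd_mul_right, h, one_mul]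

theorem sum_divisorsAntidiagonal_mul {M : Type*} [AddCommMonoid M] (f : ℕ × ℕ → M) (m D : ℕ) :
    ∑ p ∈ (m * D).divisorsAntidiagonal, f p =
      ∑ d ∈ D.divisorsAntidiagonal,
        ∑ p ∈ m.divisorsAntidiagonal with p.1.Coprime d.1, f (p.1 * d.2, p.2 * d.1) := by
  rcases eq_or_ne m 0 with rfl | hm
  · simp
  rcases eq_or_ne D 0 with rfl | hD
  · simp
  have hsplit : ∀ p ∈ (m * D).divisorsAntidiagonal,
      D / p.1.gcd D ∣ p.2 ∧ p.1 / p.1.gcd D * (p.2 / (D / p.1.gcd D)) = m := fun p hp =>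
    div_gcd_mul_div_eq_of_mul_eq_mul hD (mem_divisorsAntidiagonal.1 hp).1
  have hinv : ∀ p ∈ (m * D).divisorsAntidiagonal,
      (p.1 / p.1.gcd D * p.1.gcd D, p.2 / (D / p.1.gcd D) * (D / p.1.gcd D)) = p := fun p hp =>
    Prod.ext (Nat.div_mul_cancel (gcd_dvd_left _ _)) (Nat.div_mul_cancel (hsplit p hp).1)
  rw [sum_sigma']
  refine sum_nbij'
    (fun p => ⟨(D / p.1.gcd D, p.1.gcd D), (p.1 / p.1.gcd D, p.2 / (D / p.1.gcd D))⟩)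
    (fun x => (x.2.1 * x.1.2, x.2.2 * x.1.1)) (fun p hp => ?_) (fun x hx => ?_) hinv
    (fun x hx => ?_) (fun p hp => congrArg f (hinv p hp).symm)
  · simp only [mem_sigma, mem_filter, mem_divisorsAntidiagonal]
    exact ⟨⟨Nat.div_mul_cancel (gcd_dvd_right _ _), hD⟩, ⟨(hsplit p hp).2, hm⟩,
      coprime_div_gcd_div_gcd (gcd_pos_of_pos_right _ (Nat.pos_of_ne_zero hD))⟩
  · simp only [mem_sigma, mem_filter, mem_divisorsAntidiagonal] at hx ⊢
    obtain ⟨⟨hd, -⟩, ⟨hm', -⟩, -⟩ := hx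
    refine ⟨by rw [← hd, ← hm']; ring, mul_ne_zero hm hD⟩
  · obtain ⟨⟨d₁, d₂⟩, m₁, m₂⟩ := x
    simp only [mem_sigma, mem_filter, mem_divisorsAntidiagonal] at hx
    obtain ⟨⟨rfl, hD⟩, ⟨-, -⟩, hcop⟩ := hx
    have hd₁ : d₁ ≠ 0 := left_ne_zero_of_mul hD
    have hd₂ : d₂ ≠ 0 := right_ne_zero_of_mul hD
    simp only [hcop.gcd_mul_mul_right, Nat.mul_div_cancel _ (Nat.pos_of_ne_zero hd₁),
      Nat.mul_div_cancel _ (Nat.pos_of_ne_zero hd₂)]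

theorem sum_Icc_sum_divisorsAntidiagonal {M : Type*} [AddCommMonoid M] (N : ℕ) (P : ℕ → Prop)
    [DecidablePred P] (Q : ℕ × ℕ → Prop) [DecidablePred Q] (f : ℕ × ℕ → M) :
    ∑ n ∈ Icc 1 N with P n, ∑ p ∈ n.divisorsAntidiagonal with Q p, f p =
      ∑ p ∈ Icc 1 N ×ˢ Icc 1 N with p.1 * p.2 ≤ N ∧ P (p.1 * p.2) ∧ Q p, f p := by
  have hmaps : ∀ p ∈ ({p ∈ Icc 1 N ×ˢ Icc 1 N | p.1 * p.2 ≤ N ∧ P (p.1 * p.2) ∧ Q p} : Finset _),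
      p.1 * p.2 ∈ {n ∈ Icc 1 N | P n} := by
    intro p hp
    simp only [mem_filter, mem_Icc, mem_product] at hp ⊢
    exact ⟨⟨Nat.mul_pos hp.1.1.1 hp.1.2.1, hp.2.1⟩, hp.2.2.1⟩
  rw [← sum_fiberwise_of_maps_to hmaps]
  refine sum_congr rfl fun n hn => sum_congr (ext fun p => ?_) fun _ _ => rfl
  simp only [mem_filter, mem_Icc, mem_product, mem_divisorsAntidiagonal] at hn ⊢
  constructor
  · rintro ⟨⟨rfl, -⟩, hQ⟩
    have h₁ : 0 < p.1 := Nat.pos_of_mul_pos_right hn.1.1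
    have h₂ : 0 < p.2 := Nat.pos_of_mul_pos_left hn.1.1
    exact ⟨⟨⟨⟨h₁, (Nat.le_mul_of_pos_right _ h₂).trans hn.1.2⟩, h₂,
      (Nat.le_mul_of_pos_left _ h₁).trans hn.1.2⟩, hn.1.2, hn.2, hQ⟩, rfl⟩
  · rintro ⟨⟨-, -, -, hQ⟩, rfl⟩
    exact ⟨⟨rfl, Nat.one_le_iff_ne_zero.1 hn.1.1⟩, hQ⟩

end Nat

theorem conv_decomposition_general (f₁ f₂ : ℕ → ℝ) (k D : ℕ) (X : ℝ) :
    ∑ m ∈ (Finset.Icc 1 ⌊X⌋₊).filter (fun m => Nat.gcd m k = 1),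
      ∑ p ∈ (m * D).divisorsAntidiagonal, f₁ p.1 * f₂ p.2
    = ∑ d ∈ D.divisorsAntidiagonal,
        ∑ p ∈ ((Finset.Icc 1 ⌊X⌋₊ ×ˢ Finset.Icc 1 ⌊X⌋₊).filter
            (fun p => p.1 * p.2 ≤ ⌊X⌋₊ ∧ Nat.gcd p.1 (k * d.1) = 1 ∧ Nat.gcd p.2 k = 1)),
          f₁ (p.1 * d.2) * f₂ (p.2 * d.1) := by
  simp_rw [Nat.sum_divisorsAntidiagonal_mul (fun p => f₁ p.1 * f₂ p.2)]
  rw [sum_comm]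
  refine sum_congr rfl fun d _ => ?_
  rw [Nat.sum_Icc_sum_divisorsAntidiagonal]
  refine sum_congr (filter_congr fun p _ => ?_) fun _ _ => rfl
  simp only [← Nat.coprime_iff_gcd_eq_one, Nat.coprime_mul_iff_left, Nat.coprime_mul_iff_right]
  tauto

theorem conv_decomposition (f₁ f₂ : ℕ → ℝ) (k D : ℕ) (hk : 0 < k) (hD : 0 < D)
    (X : ℝ) (hX : 1 ≤ X) :
    ∑ m ∈ (Finset.Icc 1 ⌊X⌋₊).filter (fun m => Nat.gcd m k = 1),
      ∑ p ∈ (m * D).divisorsAntidiagonal, f₁ p.1 * f₂ p.2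
    = ∑ d ∈ D.divisorsAntidiagonal,
        ∑ p ∈ ((Finset.Icc 1 ⌊X⌋₊ ×ˢ Finset.Icc 1 ⌊X⌋₊).filter
            (fun p => p.1 * p.2 ≤ ⌊X⌋₊ ∧ Nat.gcd p.1 (k * d.1) = 1 ∧ Nat.gcd p.2 k = 1)),
          f₁ (p.1 * d.2) * f₂ (p.2 * d.1) :=
  conv_decomposition_general f₁ f₂ k D X
end

section
/- If χ is a Dirichlet character modulo k′ induced by the primitive character ψ modulo q (so q | k′), then the Gauss sums satisfy τ(χ) = μ(k′/q) · ψ(k′/q) · τ(ψ). -/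
/-!
With `k = q d`, the induced character is `χ(a) = [(a, d) = 1] ψ(a)`, and Möbius inversion writes
the coprimality condition as `∑_{t ∣ (a, d)} μ(t)`. The multiples `a = t b` then contribute
`μ(t) ψ(t) ∑_{b < q s} ψ(b) e(b / (q s))` with `s = d / t`. Since `ψ` has period `q`,
splitting `b = j q + c` factors this sum through `∑_{j < s} e(j / s)`, which vanishes unless
`s = 1`, i.e. `t = d`.
-/

open Complex

/-- `e(x) = exp(2πix)`. -/
noncomputable def eadd (x : ℝ) : ℂ := Complex.exp (2 * Real.pi * Complex.I * x)

/-- The Gauss sum `τ(χ) = Σ_{a=1}^{n} χ(a) e(a/n)` of a Dirichlet character mod `n`. -/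
noncomputable def gaussSum' {n : ℕ} (χ : DirichletCharacter ℂ n) : ℂ :=
  ∑ a ∈ Finset.range n, χ (a : ZMod n) * eadd ((a : ℝ) / n)

open Finset ArithmeticFunction
open scoped ArithmeticFunction.Moebius

lemma eadd_add (x y : ℝ) : eadd (x + y) = eadd x * eadd y := by
  simp only [eadd, ← Complex.exp_add]
  push_cast
  ring_nf

lemma sum_range_eadd_div_eq_zero {s : ℕ} (hs : 1 < s) : ∑ j ∈ range s, eadd (j / s) = 0 := by
  have hζ := Complex.isPrimitiveRoot_exp s (by omega)
  convert hζ.geom_sum_eq_zero hs using 2 with j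
  rw [eadd, ← Complex.exp_nat_mul]
  push_cast
  ring_nf

lemma Finset.sum_range_mul_eq_sum_sum {M : Type*} [AddCommMonoid M] (f : ℕ → M) (m n : ℕ) :
    ∑ a ∈ range (m * n), f a = ∑ j ∈ range n, ∑ c ∈ range m, f (j * m + c) := by
  induction n with
  | zero => simp
  | succ n ih => rw [Nat.mul_succ, sum_range_add, ih, sum_range_succ, mul_comm m n]

lemma sum_divisors_filter_dvd_moebius {R : Type*} [Ring R] {d : ℕ} (hd : d ≠ 0) (a : ℕ) :
    ∑ t ∈ d.divisors with t ∣ a, (μ t : R) = if a.Coprime d then 1 else 0 := by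
  have hfilter : {t ∈ d.divisors | t ∣ a} = (a.gcd d).divisors := by
    rw [← Nat.divisors_filter_dvd_of_dvd hd (Nat.gcd_dvd_right a d)]
    refine filter_congr fun t ht ↦ ?_
    rw [Nat.dvd_gcd_iff, and_iff_left (Nat.dvd_of_mem_divisors ht)]
  rw [hfilter, ← one_apply, ← coe_moebius_mul_coe_zeta, coe_mul_zeta_apply]
  simp only [intCoe_apply]

lemma DirichletCharacter.changeLevel_mul_natCast_apply {R : Type*} [CommMonoidWithZero R]
    {q : ℕ} (ψ : DirichletCharacter R q) (d a : ℕ) :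
    changeLevel (dvd_mul_right q d) ψ a = if a.Coprime d then ψ a else 0 := by
  by_cases hk : a.Coprime (q * d)
  · rw [if_pos (Nat.Coprime.coprime_mul_left_right hk)]
    simpa using changeLevel_eq_cast_of_dvd' ψ _ (Nat.isCoprime_iff_coprime.mpr hk)
  · rw [MulChar.map_nonunit _ (mt (ZMod.isUnit_iff_coprime a _).mp hk), eq_comm, ite_eq_right_iff]
    intro hd
    rw [Nat.coprime_mul_iff_right, not_and_or] at hk
    exact MulChar.map_nonunit _ (mt (ZMod.isUnit_iff_coprime a q).mp (hk.resolve_right (· hd)))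

noncomputable def expSum (f : ℕ → ℂ) (n : ℕ) : ℂ := ∑ a ∈ range n, f a * eadd (a / n)

lemma expSum_sum {ι : Type*} (s : Finset ι) (g : ι → ℕ → ℂ) (n : ℕ) :
    expSum (fun a ↦ ∑ i ∈ s, g i a) n = ∑ i ∈ s, expSum (g i) n := by
  simp only [expSum, sum_mul]
  exact sum_comm

lemma expSum_const_mul (c : ℂ) (f : ℕ → ℂ) (n : ℕ) :
    expSum (fun a ↦ c * f a) n = c * expSum f n := by
  simp only [expSum, mul_sum, mul_assoc]

lemma expSum_mul_eq_zero_of_periodic {f : ℕ → ℂ} {q s : ℕ} (hf : Function.Periodic f q)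
    (hs : 1 < s) : expSum f (q * s) = 0 := by
  rcases eq_or_ne q 0 with rfl | hq
  · simp [expSum]
  have hsplit (j c : ℕ) : f (j * q + c) * eadd ((j * q + c : ℕ) / (q * s : ℕ))
      = eadd (j / s) * (f c * eadd (c / (q * s : ℕ))) := by
    rw [add_comm, show f (c + j * q) = f c by simpa using hf.nat_mul j c, ← mul_left_comm,
      ← eadd_add]
    congr 2
    push_cast
    field_simp
    ring
  simp only [expSum, sum_range_mul_eq_sum_sum, hsplit, ← sum_mul_sum,
    sum_range_eadd_div_eq_zero hs, zero_mul]

lemma expSum_ite_dvd (f : ℕ → ℂ) {t : ℕ} (ht : t ≠ 0) (m : ℕ) :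
    expSum (fun a ↦ if t ∣ a then f a else 0) (t * m) = expSum (fun b ↦ f (t * b)) m := by
  simp only [expSum, sum_range_mul_eq_sum_sum]
  refine sum_congr rfl fun j _ ↦ ?_
  rw [sum_eq_single_of_mem 0 (mem_range.mpr (Nat.pos_of_ne_zero ht))]
  · rw [add_zero, if_pos (dvd_mul_left t j), mul_comm j t]
    congr 2
    push_cast
    field_simp
  · intro c hc hc0
    rw [if_neg, zero_mul]
    rw [Nat.dvd_add_right (dvd_mul_left t j)]
    exact fun h ↦ hc0 (Nat.eq_zero_of_dvd_of_lt h (mem_range.mp hc))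

lemma gaussSum'_eq_expSum {n : ℕ} (χ : DirichletCharacter ℂ n) :
    gaussSum' χ = expSum (fun a ↦ χ a) n := rfl

lemma gaussSum'_changeLevel_mul {q : ℕ} (ψ : DirichletCharacter ℂ q) {d : ℕ} (hd : d ≠ 0) :
    gaussSum' (DirichletCharacter.changeLevel (dvd_mul_right q d) ψ) =
      μ d * ψ d * gaussSum' ψ := by
  have hψ : Function.Periodic (fun a : ℕ ↦ ψ a) q := fun a ↦ by simp
  calc gaussSum' (DirichletCharacter.changeLevel (dvd_mul_right q d) ψ)
      = expSum (fun a ↦ ∑ t ∈ d.divisors, (μ t : ℂ) * if t ∣ a then ψ a else 0)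
          (q * d) := by
        rw [gaussSum'_eq_expSum]
        congr 1
        ext a
        simp only [DirichletCharacter.changeLevel_mul_natCast_apply, mul_ite, mul_zero,
          ← sum_filter, ← sum_mul, sum_divisors_filter_dvd_moebius hd, ite_mul, one_mul,
          zero_mul]
    _ = ∑ t ∈ d.divisors, μ t * ψ t * expSum (fun a ↦ ψ a) (q * (d / t)) := by
        rw [expSum_sum]
        refine sum_congr rfl fun t ht ↦ ?_
        have ht0 : t ≠ 0 := Nat.pos_of_mem_divisors ht |>.ne'
        rw [expSum_const_mul, show q * d = t * (q * (d / t)) by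
          rw [mul_left_comm, Nat.mul_div_cancel' (Nat.dvd_of_mem_divisors ht)],
          expSum_ite_dvd _ ht0]
        simp only [Nat.cast_mul, map_mul, expSum_const_mul, mul_assoc]
    _ = μ d * ψ d * expSum (fun a ↦ ψ a) (q * (d / d)) := by
        refine sum_eq_single_of_mem d (Nat.mem_divisors_self d hd) fun t ht htd ↦ ?_
        rw [expSum_mul_eq_zero_of_periodic hψ, mul_zero]
        rw [Nat.lt_div_iff_mul_lt' (Nat.dvd_of_mem_divisors ht), mul_one]
        exact (Nat.divisor_le ht).lt_of_ne htd
    _ = μ d * ψ d * gaussSum' ψ := by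
        rw [Nat.div_self (Nat.pos_of_ne_zero hd), mul_one, gaussSum'_eq_expSum]

theorem gaussSum_induced_general (q k : ℕ) (h : q ∣ k)
    (ψ : DirichletCharacter ℂ q) :
    gaussSum' (DirichletCharacter.changeLevel h ψ) =
      (ArithmeticFunction.moebius (k / q) : ℂ) * ψ ((k / q : ℕ) : ZMod q) * gaussSum' ψ := by
  obtain ⟨d, rfl⟩ := h
  -- if `q * d = 0`, the sums run over `range 0` and `μ (q * d / q) = μ 0 = 0`
  rcases eq_or_ne q 0 with rfl | hq
  · simp [gaussSum']
  rcases eq_or_ne d 0 with rfl | hd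
  · simp [gaussSum']
  rw [Nat.mul_div_cancel_left d (Nat.pos_of_ne_zero hq)]
  exact gaussSum'_changeLevel_mul ψ hd

theorem gaussSum_induced (q k : ℕ) [NeZero q] [NeZero k] (h : q ∣ k)
    (ψ : DirichletCharacter ℂ q) (hψ : ψ.IsPrimitive) :
    gaussSum' (DirichletCharacter.changeLevel h ψ) =
      (ArithmeticFunction.moebius (k / q) : ℂ) * ψ ((k / q : ℕ) : ZMod q) * gaussSum' ψ :=
  gaussSum_induced_general q k h ψ
end

section
/- For a prime p, real s with Re(s) > 1, Σ_{k ≥ 1, gcd(k,p)=1} μ(k) log(k) / k^s = (1 − p^{−s})^{−2} · (log p)/p^s · ζ(s)^{−1} + (1 − p^{−s})^{−1} · ζ′(s)/ζ(s)². -/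
/-!
The summand is the `k`-th term of the L-series of `log · χμ`, where `χ` is the trivial Dirichlet
character mod `p`. Since `L(χμ) = 1 / L(χ)` and `L(χ, s) = (1 - p^{-s}) ζ(s)`, differentiating
gives `L(log · χμ, s) = L(χ)'(s) / L(χ, s)²`, which expands to the right-hand side.
-/

open ArithmeticFunction LSeries Complex
open scoped ArithmeticFunction.Moebius LSeries.notation Topology

namespace DirichletCharacter

variable {N : ℕ} (χ : DirichletCharacter ℂ N)

lemma abscissaOfAbsConv_le_one : abscissaOfAbsConv ↗χ ≤ 1 :=
  abscissaOfAbsConv_le_of_forall_lt_LSeriesSummable fun _ hy ↦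
    LSeriesSummable_of_one_lt_re χ (by simpa using hy)

lemma abscissaOfAbsConv_mul_moebius_le_one : abscissaOfAbsConv (↗χ * ↗μ) ≤ 1 :=
  abscissaOfAbsConv_le_of_forall_lt_LSeriesSummable fun _ hy ↦
    LSeriesSummable_mul χ (LSeriesSummable_moebius_iff.mpr (by simpa using hy))

lemma LSeries_mul_moebius_eventuallyEq_inv {s : ℂ} (hs : 1 < s.re) :
    L (↗χ * ↗μ) =ᶠ[𝓝 s] fun z ↦ (L ↗χ z)⁻¹ := by
  filter_upwards [(isOpen_lt continuous_const continuous_re).mem_nhds hs] with z hz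
  exact eq_inv_of_mul_eq_one_right (LSeries.mul_mu_eq_one χ hz)

lemma LSeries_logMul_mul_moebius {s : ℂ} (hs : 1 < s.re) :
    L (logMul (↗χ * ↗μ)) s = deriv (L ↗χ) s / L ↗χ s ^ 2 := by
  have hre : (1 : EReal) < s.re := mod_cast hs
  have hχ : HasDerivAt (L ↗χ) (deriv (L ↗χ) s) s :=
    (LSeries_hasDerivAt ((abscissaOfAbsConv_le_one χ).trans_lt hre)).differentiableAt.hasDerivAt
  have hinv := (hχ.inv (LSeries_ne_zero_of_one_lt_re χ hs)).congr_of_eventuallyEq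
    (LSeries_mul_moebius_eventuallyEq_inv χ hs)
  have hderiv :=
    hinv.unique (LSeries_hasDerivAt ((abscissaOfAbsConv_mul_moebius_le_one χ).trans_lt hre))
  linear_combination hderiv

lemma one_apply_natCast {R : Type*} [CommMonoidWithZero R] (k : ℕ) :
    (1 : DirichletCharacter R N) k = if k.Coprime N then 1 else 0 := by
  split_ifs with h
  · exact MulChar.one_apply ((ZMod.isUnit_iff_coprime k N).mpr h)
  · exact MulChar.map_nonunit _ (mt (ZMod.isUnit_iff_coprime k N).mp h)

lemma LSeries_one_eventuallyEq_of_prime {p : ℕ} (hp : p.Prime) {s : ℂ} (hs : 1 < s.re) :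
    L ↗(1 : DirichletCharacter ℂ p) =ᶠ[𝓝 s]
      fun z ↦ (1 - (p : ℂ) ^ (-z)) * riemannZeta z := by
  have : NeZero p := ⟨hp.ne_zero⟩
  filter_upwards [(isOpen_lt continuous_const continuous_re).mem_nhds hs] with z hz
  have hz1 : z ≠ 1 := by rintro rfl; simp at hz
  rw [← LFunction_eq_LSeries _ hz, ← LFunctionTrivChar,
    LFunctionTrivChar_eq_mul_riemannZeta hz1, hp.primeFactors, Finset.prod_singleton]

lemma term_logMul_one_mul_moebius (hN : N ≠ 1) (s : ℂ) (k : ℕ) :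
    term (logMul (↗(1 : DirichletCharacter ℂ N) * ↗μ)) s k =
      if k.gcd N = 1 then (μ k : ℂ) * (Real.log k : ℂ) / (k : ℂ) ^ s else 0 := by
  rcases eq_or_ne k 0 with rfl | hk
  · simp [hN]
  · rw [term_of_ne_zero hk, logMul, Pi.mul_apply, one_apply_natCast]
    split_ifs <;> simp_all [natCast_log, mul_comm]

end DirichletCharacter

lemma hasDerivAt_one_sub_cpow_neg_mul_riemannZeta {p : ℕ} (hp : p ≠ 0) {s : ℂ}
    (hs : s ≠ 1) :
    HasDerivAt (fun z ↦ (1 - (p : ℂ) ^ (-z)) * riemannZeta z)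
      ((p : ℂ) ^ (-s) * Complex.log p * riemannZeta s
        + (1 - (p : ℂ) ^ (-s)) * deriv riemannZeta s) s := by
  have hcpow :
      HasDerivAt (fun z : ℂ ↦ (p : ℂ) ^ (-z)) ((p : ℂ) ^ (-s) * Complex.log p * -1) s :=
    (hasDerivAt_id s).neg.const_cpow (.inl (Nat.cast_ne_zero.mpr hp))
  exact ((hcpow.const_sub 1).fun_mul (differentiableAt_riemannZeta hs).hasDerivAt).congr_deriv
    (by ring)

theorem sum_moebius_log_coprime_p (p : ℕ) (hp : p.Prime) (s : ℂ) (hs : 1 < s.re) :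
    ∑' k : ℕ, (if Nat.gcd k p = 1 then
        (ArithmeticFunction.moebius k : ℂ) * (Real.log k : ℂ) / (k : ℂ) ^ s else 0)
      = ((1 - (p : ℂ) ^ (-s))⁻¹) ^ 2 * ((Real.log p : ℂ) / (p : ℂ) ^ s) *
          (riemannZeta s)⁻¹
        + (1 - (p : ℂ) ^ (-s))⁻¹ * deriv riemannZeta s / (riemannZeta s) ^ 2 := by
  have hs1 : s ≠ 1 := by rintro rfl; simp at hs
  have hχ := DirichletCharacter.LSeries_one_eventuallyEq_of_prime hp hs
  have hL := (1 : DirichletCharacter ℂ p).LSeries_logMul_mul_moebius hs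
  rw [hχ.deriv_eq, hχ.eq_of_nhds,
    (hasDerivAt_one_sub_cpow_neg_mul_riemannZeta hp.ne_zero hs1).deriv] at hL
  have hζ := riemannZeta_ne_zero_of_one_lt_re hs
  have hfac := one_sub_prime_cpow_ne_zero hp hs
  simp_rw [← DirichletCharacter.term_logMul_one_mul_moebius hp.one_lt.ne']
  rw [← LSeries, hL, natCast_log, cpow_neg]
  field_simp
end
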